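/- arXiv:2311.03808 — 6 statements merged into one kernel-verified Lean document; each statement's English description precedes it below -/
import Mathlib

section
/- Let K be a field and let α : ℕ → ℕ → K satisfy α a b ≠ 0 for all a, b ≥ 1. Assume the unitality conditions α 1 a = 1 and α a 1 = 1 for all a ≥ 1, and the parallel-associativity functional equation α a b * α (a+b-1) c = α a c * α (a+c-1) b for all a, b, c ≥ 1. Then α is symmetric, i.e. α b c = α c b for all b, c ≥ 1, and α also satisfies the nested-associativity functional equation α a b * α (a+b-1) c = α a (b+c-1) * α b c for all a, b, c ≥ 1. -/
/-- Classification of operad structures on the positive exponential species `E₊`: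
a coefficient system `α` satisfying the unitality conditions and the
parallel-associativity functional equation is symmetric and also satisfies the
nested-associativity functional equation. -/
theorem unital_parallel_implies_symm_and_nested
    {K : Type*} [Field K] (α : ℕ → ℕ → K)
    (hne : ∀ a b : ℕ, 1 ≤ a → 1 ≤ b → α a b ≠ 0)
    (hu1 : ∀ a : ℕ, 1 ≤ a → α 1 a = 1)
    (hu2 : ∀ a : ℕ, 1 ≤ a → α a 1 = 1)
    (hpar : ∀ a b c : ℕ, 1 ≤ a → 1 ≤ b → 1 ≤ c →
      α a b * α (a + b - 1) c = α a c * α (a + c - 1) b) :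
    (∀ b c : ℕ, 1 ≤ b → 1 ≤ c → α b c = α c b) ∧
    (∀ a b c : ℕ, 1 ≤ a → 1 ≤ b → 1 ≤ c →
      α a b * α (a + b - 1) c = α a (b + c - 1) * α b c) := by
  have hsymm : ∀ b c : ℕ, 1 ≤ b → 1 ≤ c → α b c = α c b := by
    intro b c hb hc
    have h := hpar 1 b c le_rfl hb hc
    have e1 : 1 + b - 1 = b := by omega
    have e2 : 1 + c - 1 = c := by omega
    rw [e1, e2, hu1 b hb, hu1 c hc, one_mul, one_mul] at h
    exact h
  refine ⟨hsymm, fun a b c ha hb hc => ?_⟩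
  have h := hpar b a c hb ha hc
  rw [hsymm b a hb ha, Nat.add_comm b a] at h
  rw [h, hsymm (b + c - 1) a (by omega) ha, mul_comm]
end

section
/- Let K be a field and let α : ℕ → ℕ → K satisfy α a b ≠ 0 for all a, b ≥ 1, the unitality conditions α 1 a = 1 and α a 1 = 1 for all a ≥ 1, the parallel equation α a b * α (a+b-1) c = α a c * α (a+c-1) b, and the nested equation α a b * α (a+b-1) c = α a (b+c-1) * α b c, for all a, b, c ≥ 1. Then there exists λ : ℕ → K with λ n ≠ 0 for all n ≥ 1, λ 1 = 1, and α a b * λ (a+b-1) = λ a * λ b for all a, b ≥ 1. -/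
/-!
The nested equation is the cocycle condition for the monoid `(ℤ_{>0}, a ∗ b = a + b - 1) ≅ (ℕ, +)`,
which is free on the generator `2`. Its instance `c = 2` expresses `α a (b + 1)` through `α a b`,
so a normalized cocycle is determined by the values `α k 2`; the potential
`λ n = (∏_{1 ≤ k < n} α k 2)⁻¹` is built from those values and trivializes `α` by induction on `b`.
-/

section

variable {K : Type*} [Field K]

noncomputable def cocyclePotential (α : ℕ → ℕ → K) (n : ℕ) : K :=
  (∏ k ∈ Finset.Ico 1 n, α k 2)⁻¹

variable (α : ℕ → ℕ → K)

@[simp]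
theorem cocyclePotential_one : cocyclePotential α 1 = 1 := by
  simp [cocyclePotential]

theorem cocyclePotential_ne_zero (h2 : ∀ k : ℕ, 1 ≤ k → α k 2 ≠ 0) (n : ℕ) :
    cocyclePotential α n ≠ 0 :=
  inv_ne_zero <| Finset.prod_ne_zero_iff.mpr fun k hk => h2 k (Finset.mem_Ico.mp hk).1

theorem cocyclePotential_succ {n : ℕ} (hn : 1 ≤ n) :
    cocyclePotential α (n + 1) = cocyclePotential α n / α n 2 := by
  rw [cocyclePotential, Finset.prod_Ico_succ_top hn, mul_inv, cocyclePotential, div_eq_mul_inv]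

theorem cocycle_mul_cocyclePotential (h2 : ∀ k : ℕ, 1 ≤ k → α k 2 ≠ 0)
    (hunit : ∀ a : ℕ, 1 ≤ a → α a 1 = 1)
    (hcocycle : ∀ a b c : ℕ, 1 ≤ a → 1 ≤ b → 1 ≤ c →
      α a b * α (a + b - 1) c = α a (b + c - 1) * α b c)
    {a b : ℕ} (ha : 1 ≤ a) (hb : 1 ≤ b) :
    α a b * cocyclePotential α (a + b - 1) = cocyclePotential α a * cocyclePotential α b := by
  induction b, hb using Nat.le_induction with
  | base => simp [hunit a ha]
  | succ b hb ih =>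
    have hab : 1 ≤ a + b - 1 := by omega
    have key : α a b * α (a + b - 1) 2 = α a (b + 1) * α b 2 := by
      simpa using hcocycle a b 2 ha hb one_le_two
    rw [show a + (b + 1) - 1 = a + b - 1 + 1 by omega, cocyclePotential_succ α hab,
      cocyclePotential_succ α hb]
    field_simp [h2 b hb, h2 _ hab]
    linear_combination α (a + b - 1) 2 * ih - cocyclePotential α (a + b - 1) * key

end

theorem exists_coboundary_of_cocycle_general
    {K : Type*} [Field K] (α : ℕ → ℕ → K)
    (hne : ∀ a b : ℕ, 1 ≤ a → 1 ≤ b → α a b ≠ 0)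
    (hu2 : ∀ a : ℕ, 1 ≤ a → α a 1 = 1)
    (hnest : ∀ a b c : ℕ, 1 ≤ a → 1 ≤ b → 1 ≤ c →
      α a b * α (a + b - 1) c = α a (b + c - 1) * α b c) :
    ∃ lam : ℕ → K, (∀ n : ℕ, 1 ≤ n → lam n ≠ 0) ∧ lam 1 = 1 ∧
      ∀ a b : ℕ, 1 ≤ a → 1 ≤ b → α a b * lam (a + b - 1) = lam a * lam b := by
  have h2 : ∀ k : ℕ, 1 ≤ k → α k 2 ≠ 0 := fun k hk => hne k 2 hk one_le_two
  exact ⟨cocyclePotential α, fun n _ => cocyclePotential_ne_zero α h2 n,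
    cocyclePotential_one α, fun a b ha hb => cocycle_mul_cocyclePotential α h2 hu2 hnest ha hb⟩

/-- Uniqueness of the operad structure on the positive exponential species `E₊` up to
isomorphism: any coefficient system `α` satisfying the unitality, parallel and nested
functional equations is a coboundary, i.e. of the form
`α a b = λ a * λ b / λ (a + b - 1)`. -/
theorem exists_coboundary_of_cocycle
    {K : Type*} [Field K] (α : ℕ → ℕ → K)
    (hne : ∀ a b : ℕ, 1 ≤ a → 1 ≤ b → α a b ≠ 0)
    (hu1 : ∀ a : ℕ, 1 ≤ a → α 1 a = 1)
    (hu2 : ∀ a : ℕ, 1 ≤ a → α a 1 = 1)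
    (hpar : ∀ a b c : ℕ, 1 ≤ a → 1 ≤ b → 1 ≤ c →
      α a b * α (a + b - 1) c = α a c * α (a + c - 1) b)
    (hnest : ∀ a b c : ℕ, 1 ≤ a → 1 ≤ b → 1 ≤ c →
      α a b * α (a + b - 1) c = α a (b + c - 1) * α b c) :
    ∃ lam : ℕ → K, (∀ n : ℕ, 1 ≤ n → lam n ≠ 0) ∧ lam 1 = 1 ∧
      ∀ a b : ℕ, 1 ≤ a → 1 ≤ b → α a b * lam (a + b - 1) = lam a * lam b :=
  exists_coboundary_of_cocycle_general α hne hu2 hnest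
end

section
/- Let π be a partition of a finite set S, let s and s' be two distinct elements of S, and let T and U be nonempty finite sets such that S, T, U are pairwise disjoint. Then π □_s T is a partition of (S ∖ {s}) ∪ T, and the parallel associativity law holds: (π □_s T) □_{s'} U = (π □_{s'} U) □_s T; both sides are partitions of ((S ∖ {s, s'}) ∪ T) ∪ U. -/
/-- A partition of a finite set `S`: a finite set of nonempty, pairwise disjoint
blocks whose union is `S`. -/
def IsSetPartition {α : Type*} [DecidableEq α]
    (π : Finset (Finset α)) (S : Finset α) : Prop :=
  (∀ B ∈ π, B.Nonempty) ∧
  (∀ B ∈ π, ∀ C ∈ π, B ≠ C → Disjoint B C) ∧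
  π.biUnion id = S

/-- The block of the partition `π` containing `s` (the union of all blocks
containing `s`, which is the unique such block when `π` is a partition). -/
def blockOf {α : Type*} [DecidableEq α] (π : Finset (Finset α)) (s : α) : Finset α :=
  π.biUnion (fun B => if s ∈ B then B else ∅)

/-- The partial composition `π □_s T := (π \ {B_s}) ∪ {(B_s \ {s}) ∪ T}` of a set
partition with a nonempty finite set `T` at `s`; this is the nonunital operad
structure on the species of set partitions obtained from `Com₊`. -/
def sqComp {α : Type*} [DecidableEq α] (π : Finset (Finset α)) (s : α)
    (T : Finset α) : Finset (Finset α) :=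
  insert ((blockOf π s \ {s}) ∪ T) (π.erase (blockOf π s))

section Helpers
variable {α : Type*} [DecidableEq α]

lemma mem_blockOf_iff {π : Finset (Finset α)} {s x : α} :
    x ∈ blockOf π s ↔ ∃ C ∈ π, s ∈ C ∧ x ∈ C := by
  simp only [blockOf, Finset.mem_biUnion]
  refine exists_congr fun C => and_congr_right fun _ => ?_
  split <;> simp_all

lemma blockOf_eq {π : Finset (Finset α)}
    (hd : ∀ B ∈ π, ∀ C ∈ π, B ≠ C → Disjoint B C)
    {B : Finset α} (hB : B ∈ π) {s : α} (hsB : s ∈ B) :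
    blockOf π s = B := by
  ext x
  rw [mem_blockOf_iff]
  constructor
  · rintro ⟨C, hC, hsC, hxC⟩
    by_cases h : C = B
    · exact h ▸ hxC
    · exact absurd hsB (Finset.disjoint_left.mp (hd C hC B hB h) hsC)
  · exact fun hx => ⟨B, hB, hsB, hx⟩

lemma block_subset {π : Finset (Finset α)} {S : Finset α} (hπ : IsSetPartition π S)
    {B : Finset α} (hB : B ∈ π) : B ⊆ S := by
  intro x hx
  rw [← hπ.2.2]
  exact Finset.mem_biUnion.mpr ⟨B, hB, hx⟩

lemma blockOf_mem {π : Finset (Finset α)} {S : Finset α} (hπ : IsSetPartition π S)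
    {s : α} (hs : s ∈ S) : blockOf π s ∈ π ∧ s ∈ blockOf π s := by
  rw [← hπ.2.2] at hs
  obtain ⟨B, hB, hsB⟩ := Finset.mem_biUnion.mp hs
  rw [blockOf_eq hπ.2.1 hB hsB]
  exact ⟨hB, hsB⟩

lemma newblock_notMem {π : Finset (Finset α)} {S T : Finset α} (hπ : IsSetPartition π S)
    (hT : T.Nonempty) (hST : Disjoint S T) {s : α} :
    (blockOf π s \ {s}) ∪ T ∉ π := by
  intro h
  obtain ⟨t, ht⟩ := hT
  exact Finset.disjoint_left.mp hST (block_subset hπ h (Finset.mem_union_right _ ht)) ht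

lemma sqComp_isSetPartition {π : Finset (Finset α)} {S T : Finset α} {s : α}
    (hπ : IsSetPartition π S) (hs : s ∈ S) (hT : T.Nonempty) (hST : Disjoint S T) :
    IsSetPartition (sqComp π s T) ((S \ {s}) ∪ T) := by
  obtain ⟨hBm, hsB⟩ := blockOf_mem hπ hs
  set Bs := blockOf π s with hBs
  have hdisjnew : ∀ C ∈ π.erase Bs, Disjoint ((Bs \ {s}) ∪ T) C := by
    intro C hC
    rw [Finset.mem_erase] at hC
    rw [Finset.disjoint_union_left]
    exact ⟨Finset.disjoint_of_subset_left (Finset.sdiff_subset)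
        (hπ.2.1 _ hBm _ hC.2 (Ne.symm hC.1)),
      Finset.disjoint_of_subset_right (block_subset hπ hC.2) hST.symm⟩
  refine ⟨?_, ?_, ?_⟩
  · intro B hB
    rw [sqComp, Finset.mem_insert] at hB
    rcases hB with rfl | hB
    · exact hT.mono (Finset.subset_union_right)
    · exact hπ.1 _ (Finset.mem_of_mem_erase hB)
  · intro B hB C hC hne
    rw [sqComp, Finset.mem_insert] at hB hC
    rcases hB with rfl | hB <;> rcases hC with rfl | hC
    · exact absurd rfl hne
    · exact hdisjnew _ hC
    · exact (hdisjnew _ hB).symm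
    · exact hπ.2.1 _ (Finset.mem_of_mem_erase hB) _ (Finset.mem_of_mem_erase hC) hne
  · ext x
    simp only [sqComp, Finset.biUnion_insert, id, Finset.mem_union, Finset.mem_biUnion,
      Finset.mem_sdiff, Finset.mem_singleton]
    constructor
    · rintro (h | ⟨C, hC, hxC⟩)
      · rcases h with ⟨h1, h2⟩ | h
        · exact Or.inl ⟨block_subset hπ hBm h1, h2⟩
        · exact Or.inr h
      · rw [Finset.mem_erase] at hC
        refine Or.inl ⟨block_subset hπ hC.2 hxC, fun hxs => ?_⟩
        subst hxs
        exact hC.1 (blockOf_eq hπ.2.1 hC.2 hxC).symm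
    · rintro (⟨hxS, hxs⟩ | hxT)
      · rw [← hπ.2.2] at hxS
        obtain ⟨C, hC, hxC⟩ := Finset.mem_biUnion.mp hxS
        by_cases h : C = Bs
        · subst h
          exact Or.inl (Or.inl ⟨hxC, hxs⟩)
        · exact Or.inr ⟨C, Finset.mem_erase.mpr ⟨fun hh => h hh, hC⟩, hxC⟩
      · exact Or.inl (Or.inr hxT)

lemma blockOf_sqComp_same {π : Finset (Finset α)} {S T : Finset α} {s s' : α}
    (hπ : IsSetPartition π S) (hs : s ∈ S) (hT : T.Nonempty) (hST : Disjoint S T)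
    (hs'B : s' ∈ blockOf π s) (hne : s' ≠ s) :
    blockOf (sqComp π s T) s' = (blockOf π s \ {s}) ∪ T :=
  blockOf_eq (sqComp_isSetPartition hπ hs hT hST).2.1
    (Finset.mem_insert_self _ _)
    (Finset.mem_union_left _ (Finset.mem_sdiff.mpr ⟨hs'B, by simp [hne]⟩))

lemma blockOf_sqComp_other {π : Finset (Finset α)} {S T : Finset α} {s s' : α}
    (hπ : IsSetPartition π S) (hs : s ∈ S) (hs' : s' ∈ S) (hT : T.Nonempty)
    (hST : Disjoint S T) (hs'B : s' ∉ blockOf π s) :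
    blockOf (sqComp π s T) s' = blockOf π s' := by
  obtain ⟨hm, hmem⟩ := blockOf_mem hπ hs'
  refine blockOf_eq (sqComp_isSetPartition hπ hs hT hST).2.1
    (Finset.mem_insert_of_mem (Finset.mem_erase.mpr ⟨?_, hm⟩)) hmem
  intro h
  exact hs'B (h ▸ hmem)

lemma sqComp_comm {π : Finset (Finset α)} {S T U : Finset α} {s s' : α}
    (hπ : IsSetPartition π S)
    (hs : s ∈ S) (hs' : s' ∈ S) (hss' : s ≠ s')
    (hT : T.Nonempty) (hU : U.Nonempty)
    (hST : Disjoint S T) (hSU : Disjoint S U) (hTU : Disjoint T U) :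
    sqComp (sqComp π s T) s' U = sqComp (sqComp π s' U) s T := by
  obtain ⟨hBm, hsB⟩ := blockOf_mem hπ hs
  obtain ⟨hBm', hsB'⟩ := blockOf_mem hπ hs'
  have hs'T : s' ∉ T := Finset.disjoint_left.mp hST hs'
  have hsU : s ∉ U := Finset.disjoint_left.mp hSU hs
  by_cases hcase : s' ∈ blockOf π s
  · -- same block
    have hBeq : blockOf π s' = blockOf π s := blockOf_eq hπ.2.1 hBm hcase
    have hsB'2 : s ∈ blockOf π s' := hBeq ▸ hsB
    have h1 : blockOf (sqComp π s T) s' = (blockOf π s \ {s}) ∪ T :=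
      blockOf_sqComp_same hπ hs hT hST hcase (Ne.symm hss')
    have h2 : blockOf (sqComp π s' U) s = (blockOf π s' \ {s'}) ∪ U :=
      blockOf_sqComp_same hπ hs' hU hSU hsB'2 hss'
    show insert (blockOf (sqComp π s T) s' \ {s'} ∪ U)
        ((sqComp π s T).erase (blockOf (sqComp π s T) s')) =
      insert (blockOf (sqComp π s' U) s \ {s} ∪ T)
        ((sqComp π s' U).erase (blockOf (sqComp π s' U) s))
    rw [h1, h2, sqComp, sqComp,
      Finset.erase_insert (fun h => newblock_notMem hπ hT hST (Finset.mem_of_mem_erase h)),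
      Finset.erase_insert (fun h => newblock_notMem hπ hU hSU (Finset.mem_of_mem_erase h)),
      hBeq]
    congr 1
    ext x
    have hx1 : x ∈ T → x ≠ s' := fun h hh => hs'T (hh ▸ h)
    have hx2 : x ∈ U → x ≠ s := fun h hh => hsU (hh ▸ h)
    simp only [Finset.mem_union, Finset.mem_sdiff, Finset.mem_singleton]
    tauto
  · -- different blocks
    have hcase' : s ∉ blockOf π s' := fun h =>
      hcase ((blockOf_eq hπ.2.1 hBm' h) ▸ hsB')
    have hBne : blockOf π s ≠ blockOf π s' := fun h => hcase (h ▸ hsB')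
    have h1 : blockOf (sqComp π s T) s' = blockOf π s' :=
      blockOf_sqComp_other hπ hs hs' hT hST hcase
    have h2 : blockOf (sqComp π s' U) s = blockOf π s :=
      blockOf_sqComp_other hπ hs' hs hU hSU hcase'
    have hnBT : (blockOf π s \ {s}) ∪ T ≠ blockOf π s' := fun h =>
      newblock_notMem hπ hT hST (h ▸ hBm')
    have hnBU : (blockOf π s' \ {s'}) ∪ U ≠ blockOf π s := fun h =>
      newblock_notMem hπ hU hSU (h ▸ hBm)
    show insert (blockOf (sqComp π s T) s' \ {s'} ∪ U)
        ((sqComp π s T).erase (blockOf (sqComp π s T) s')) =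
      insert (blockOf (sqComp π s' U) s \ {s} ∪ T)
        ((sqComp π s' U).erase (blockOf (sqComp π s' U) s))
    rw [h1, h2, sqComp, sqComp,
      Finset.erase_insert_of_ne hnBT, Finset.erase_insert_of_ne hnBU,
      Finset.insert_comm, Finset.erase_right_comm]

end Helpers

/-- Parallel associativity for the nonunital operad structure on set partitions:
`π □_s T` is a partition of `(S \ {s}) ∪ T`, and
`(π □_s T) □_{s'} U = (π □_{s'} U) □_s T`, both sides being partitions of
`((S \ {s, s'}) ∪ T) ∪ U`. -/
theorem sqComp_parallel_assoc {α : Type*} [DecidableEq α]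
    (π : Finset (Finset α)) (S T U : Finset α) (s s' : α)
    (hπ : IsSetPartition π S)
    (hs : s ∈ S) (hs' : s' ∈ S) (hss' : s ≠ s')
    (hT : T.Nonempty) (hU : U.Nonempty)
    (hST : Disjoint S T) (hSU : Disjoint S U) (hTU : Disjoint T U) :
    IsSetPartition (sqComp π s T) ((S \ {s}) ∪ T) ∧
    sqComp (sqComp π s T) s' U = sqComp (sqComp π s' U) s T ∧
    IsSetPartition (sqComp (sqComp π s T) s' U) (((S \ {s, s'}) ∪ T) ∪ U) := by
  have h1 := sqComp_isSetPartition hπ hs hT hST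
  have hs'1 : s' ∈ (S \ {s}) ∪ T :=
    Finset.mem_union_left _ (Finset.mem_sdiff.mpr ⟨hs', by simp [Ne.symm hss']⟩)
  have hdisj : Disjoint ((S \ {s}) ∪ T) U := by
    rw [Finset.disjoint_union_left]
    exact ⟨Finset.disjoint_of_subset_left Finset.sdiff_subset hSU, hTU⟩
  have h3 := sqComp_isSetPartition h1 hs'1 hU hdisj
  have hset : ((S \ {s}) ∪ T) \ {s'} ∪ U = ((S \ {s, s'}) ∪ T) ∪ U := by
    have hs'T : s' ∉ T := Finset.disjoint_left.mp hST hs'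
    ext x
    have hx1 : x ∈ T → x ≠ s' := fun h hh => hs'T (hh ▸ h)
    simp only [Finset.mem_union, Finset.mem_sdiff, Finset.mem_singleton,
      Finset.mem_insert, not_or]
    tauto
  exact ⟨h1, sqComp_comm hπ hs hs' hss' hT hU hST hSU hTU, hset ▸ h3⟩
end

section
/- Let S, T, R be pairwise disjoint nonempty finite subsets of α, let c, d, e be cycles on S, T, R respectively, and let s, s' be two distinct elements of S. Then, in the free K-module on cycles, parallel associativity holds: (c ▷_s d) ▷_{s'} e = (c ▷_{s'} e) ▷_s d. -/
variable {α : Type*} [DecidableEq α]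

/-- The rotation of a list bringing its (first) occurrence of `s` to the front. -/
def rotTo (s : α) (l : List α) : List α := l.rotate (l.idxOf s)

/-- The partial composition of cycles: for a cycle `c` on `S` written, starting at
`s ∈ S`, as `(s, c₁, …, c_{|S|-1})` and a cycle `d` on `T`,
`c ▷_s d := Σ (t₁, …, t_{|T|}, c₁, …, c_{|S|-1})`, the sum over the `|T|` cyclic
rotations `(t₁, …, t_{|T|})` of a list representing `d`, taken in the free
`K`-module on cycles. -/
noncomputable def cycComp (K : Type*) [CommRing K] (s : α) (c d : Cycle α) :
    Cycle α →₀ K :=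
  ∑ i ∈ Finset.range (Quotient.out d).length,
    Finsupp.single (↑((Quotient.out d).rotate i ++ (rotTo s (Quotient.out c)).tail)) 1

/-- The bilinear extension of `▷_s` to the free `K`-module on cycles. -/
noncomputable def cycCompL (K : Type*) [CommRing K] (s : α)
    (x y : Cycle α →₀ K) : Cycle α →₀ K :=
  x.sum fun c a => y.sum fun d b => (a * b) • cycComp K s c d

/-! Written from `s`, the cycle `c` reads `(s, u, s', v)`, and from `s'` it reads `(s', v, s, u)`.
Composing in either order therefore yields, for the rotations `dᵢ` of `d` and `eⱼ` of `e`, the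
cycles `(eⱼ, v, dᵢ, u)` and `(dᵢ, u, eⱼ, v)` respectively, which are rotations of one another. -/

-- The head of a nontrivial rotation of `a :: l` is an element of `l`.
theorem List.IsRotated.eq_of_cons_of_notMem {β : Type*} {a : β} {l l' : List β}
    (h : a :: l ~r a :: l') (ha : a ∉ l) : l = l' := by
  obtain ⟨k, hk⟩ := h
  rw [← List.rotate_mod] at hk
  have hlt : k % (a :: l).length < (a :: l).length := Nat.mod_lt _ (by simp)
  have hhead := List.head?_rotate hlt
  rw [hk] at hhead
  cases hmod : k % (a :: l).length with
  | zero => rw [hmod, List.rotate_zero, List.cons.injEq] at hk; exact hk.2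
  | succ n =>
    rw [hmod, List.getElem?_cons_succ] at hhead
    exact absurd (List.mem_of_getElem? hhead.symm) ha

theorem Cycle.coe_append_comm {β : Type*} (l l' : List β) :
    ((l ++ l' : List β) : Cycle β) = (l' ++ l : List β) :=
  Cycle.coe_eq_coe.2 List.isRotated_append

theorem Cycle.coe_out {β : Type*} (c : Cycle β) : ((Quotient.out c : List β) : Cycle β) = c :=
  Quotient.out_eq c

theorem Cycle.mem_toFinset {β : Type*} [DecidableEq β] {c : Cycle β} {a : β} :
    a ∈ c.toFinset ↔ a ∈ c := by
  induction c using Quotient.inductionOn' with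
  | h l => exact (Cycle.coe_toFinset l ▸ List.mem_toFinset).trans Cycle.mem_coe_iff.symm

theorem Cycle.exists_eq_coe_cons_append_cons {β : Type*} {c : Cycle β} {s s' : β}
    (hs : s ∈ c) (hs' : s' ∈ c) (hss' : s ≠ s') :
    ∃ u v : List β, c = ↑(s :: (u ++ s' :: v)) := by
  induction c using Quotient.inductionOn' with | h l => ?_
  obtain ⟨a, b, rfl⟩ := List.append_of_mem (Cycle.mem_coe_iff.1 hs)
  have hs'ba : s' ∈ b ++ a := by
    have := Cycle.mem_coe_iff.1 hs'
    simp only [List.mem_append, List.mem_cons] at this ⊢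
    grind
  obtain ⟨u, v, huv⟩ := List.append_of_mem hs'ba
  refine ⟨u, v, ?_⟩
  rw [← huv]
  exact Cycle.coe_append_comm a (s :: b)

theorem head?_rotTo {s : α} {l : List α} (h : s ∈ l) : (rotTo s l).head? = some s := by
  have hn : l.idxOf s < l.length := List.idxOf_lt_length_iff.2 h
  rw [rotTo, List.head?_rotate hn, List.getElem?_eq_getElem hn, List.getElem_idxOf hn]

theorem rotTo_eq_of_isRotated {s : α} {l m : List α} (h : l ~r s :: m) (hs : s ∉ m) :
    rotTo s l = s :: m := by
  obtain ⟨t, ht⟩ : ∃ t, rotTo s l = s :: t := by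
    have hhead := head?_rotTo (h.mem_iff.2 List.mem_cons_self)
    cases h' : rotTo s l with
    | nil => simp [h'] at hhead
    | cons a t => rw [h', List.head?_cons, Option.some_inj] at hhead; rw [hhead]; exact ⟨t, rfl⟩
  have hrot : s :: m ~r s :: t := ht ▸ h.symm.trans ⟨_, rfl⟩
  rw [ht, hrot.eq_of_cons_of_notMem hs]

theorem cycComp_coe_cons (K : Type*) [CommRing K] {s : α} {m : List α} (hs : s ∉ m)
    (d : Cycle α) :
    cycComp K s ↑(s :: m) d = ∑ i ∈ Finset.range (Quotient.out d).length,
      Finsupp.single (↑((Quotient.out d).rotate i ++ m)) 1 := by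
  rw [cycComp, rotTo_eq_of_isRotated (Cycle.coe_eq_coe.1 (Cycle.coe_out _)) hs,
    List.tail_cons]

theorem cycCompL_single_one_right (K : Type*) [CommRing K] (s : α) (x : Cycle α →₀ K)
    (e : Cycle α) :
    cycCompL K s x (Finsupp.single e 1) =
      Finsupp.linearCombination K (fun c => cycComp K s c e) x := by
  rw [cycCompL, Finsupp.linearCombination_apply]
  refine Finsupp.sum_congr fun c _ => ?_
  rw [Finsupp.sum_single_index (by simp), mul_one]

theorem cycCompL_cycComp_coe_cons_append_cons (K : Type*) [CommRing K] {s s' : α}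
    {u v : List α} (hc : (s :: (u ++ s' :: v)).Nodup) {d : Cycle α} (hd : s' ∉ d)
    (e : Cycle α) :
    cycCompL K s' (cycComp K s ↑(s :: (u ++ s' :: v)) d) (Finsupp.single e 1) =
      ∑ i ∈ Finset.range (Quotient.out d).length, ∑ j ∈ Finset.range (Quotient.out e).length,
        Finsupp.single
          (↑((Quotient.out e).rotate j ++ (v ++ ((Quotient.out d).rotate i ++ u)))) 1 := by
  obtain ⟨hs, huv⟩ := List.nodup_cons.1 hc
  have hs'uv : s' ∉ u ++ v := (List.nodup_cons.1 (List.nodup_middle.1 huv)).1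
  rw [cycComp_coe_cons K hs, cycCompL_single_one_right, map_sum]
  refine Finset.sum_congr rfl fun i _ => ?_
  have hs'd : s' ∉ (Quotient.out d).rotate i := by
    rwa [List.mem_rotate, ← Cycle.mem_coe_iff, Cycle.coe_out]
  rw [Finsupp.linearCombination_single, one_smul, ← List.append_assoc,
    Cycle.coe_append_comm, List.cons_append, cycComp_coe_cons K]
  simp only [List.mem_append, not_or] at hs'uv ⊢
  exact ⟨hs'uv.2, hs'd, hs'uv.1⟩

theorem cycComp_parallel_assoc_general (K : Type*) [CommRing K]
    (S T R : Finset α)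
    (hST : Disjoint S T) (hSR : Disjoint S R)
    (c d e : Cycle α)
    (hc : c.Nodup)
    (hcS : c.toFinset = S) (hdT : d.toFinset = T) (heR : e.toFinset = R)
    (s s' : α) (hs : s ∈ S) (hs' : s' ∈ S) (hss' : s ≠ s') :
    cycCompL K s' (cycComp K s c d) (Finsupp.single e 1) =
      cycCompL K s (cycComp K s' c e) (Finsupp.single d 1) := by
  have hsc : s ∈ c := Cycle.mem_toFinset.1 (hcS ▸ hs)
  have hs'c : s' ∈ c := Cycle.mem_toFinset.1 (hcS ▸ hs')
  have hs'd : s' ∉ d := fun h => Finset.disjoint_left.1 hST hs' (hdT ▸ Cycle.mem_toFinset.2 h)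
  have hse : s ∉ e := fun h => Finset.disjoint_left.1 hSR hs (heR ▸ Cycle.mem_toFinset.2 h)
  obtain ⟨u, v, rfl⟩ := Cycle.exists_eq_coe_cons_append_cons hsc hs'c hss'
  have hrot : (↑(s :: (u ++ s' :: v)) : Cycle α) = ↑(s' :: (v ++ s :: u)) := by
    rw [← List.cons_append, Cycle.coe_append_comm, List.cons_append]
  have hc' := hrot ▸ hc
  rw [Cycle.nodup_coe_iff] at hc hc'
  rw [cycCompL_cycComp_coe_cons_append_cons K hc hs'd, hrot,
    cycCompL_cycComp_coe_cons_append_cons K hc' hse, Finset.sum_comm]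
  refine Finset.sum_congr rfl fun j _ => Finset.sum_congr rfl fun i _ => ?_
  rw [← List.append_assoc _ v, Cycle.coe_append_comm, List.append_assoc]

/-- Parallel associativity `(c ▷_s d) ▷_{s'} e = (c ▷_{s'} e) ▷_s d` for the
NPL-operad structure on the species of cycles. -/
theorem cycComp_parallel_assoc (K : Type*) [CommRing K]
    (S T R : Finset α) (hS : S.Nonempty) (hT : T.Nonempty) (hR : R.Nonempty)
    (hST : Disjoint S T) (hSR : Disjoint S R) (hTR : Disjoint T R)
    (c d e : Cycle α)
    (hc : c.Nodup) (hd : d.Nodup) (he : e.Nodup)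
    (hcS : c.toFinset = S) (hdT : d.toFinset = T) (heR : e.toFinset = R)
    (s s' : α) (hs : s ∈ S) (hs' : s' ∈ S) (hss' : s ≠ s') :
    cycCompL K s' (cycComp K s c d) (Finsupp.single e 1) =
      cycCompL K s (cycComp K s' c e) (Finsupp.single d 1) :=
  cycComp_parallel_assoc_general K S T R hST hSR c d e hc hcS hdT heR s s' hs hs' hss'
end

section
/- Let K be a commutative ring, α a type with decidable equality, and M the free K-module with basis elements b_S indexed by the nonempty finite subsets S of α. For s ∈ S and T a nonempty finite set disjoint from S, define b_S ▷_s b_T := |T| · b_{(S ∖ {s}) ∪ T}, extended K-bilinearly. Then for pairwise disjoint nonempty finite sets S, T, U and s ∈ S, t ∈ T: b_S ▷_s (b_T ▷_t b_U) − (b_S ▷_s b_T) ▷_t b_U = b_T ▷_t (b_S ▷_s b_U) − (b_T ▷_t b_S) ▷_s b_U = |U| · (|U| − 1) · b_{((S ∖ {s}) ∪ (T ∖ {t})) ∪ U}. In particular the nested pre-Lie identity holds, while nested associativity fails whenever |U| ≥ 2. -/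
variable {α : Type*} [DecidableEq α]

/-- The NPL partial composition on the exponential species `E`:
`b_S ▷_s b_T := |T| · b_{(S \ {s}) ∪ T}`, extended `K`-bilinearly to the free
`K`-module with basis the finite subsets of `α`. -/
noncomputable def eComp (K : Type*) [CommRing K] (s : α)
    (x y : Finset α →₀ K) : Finset α →₀ K :=
  x.sum fun S a => y.sum fun T b =>
    (a * b * (T.card : K)) • Finsupp.single ((S \ {s}) ∪ T) 1

lemma eComp_single (K : Type*) [CommRing K] (s : α) (S T : Finset α) (a b : K) :
    eComp K s (Finsupp.single S a) (Finsupp.single T b)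
      = Finsupp.single ((S \ {s}) ∪ T) (a * b * T.card) := by
  unfold eComp
  rw [Finsupp.sum_single_index, Finsupp.sum_single_index] <;>
    simp [Finsupp.smul_single]


/-- The NPL-operad structure on the exponential species `E ≅ E ∘ 𝕀`:
`b_S ▷_s (b_T ▷_t b_U) − (b_S ▷_s b_T) ▷_t b_U
  = b_T ▷_t (b_S ▷_s b_U) − (b_T ▷_t b_S) ▷_s b_U
  = |U|(|U|−1) · b_{((S \ {s}) ∪ (T \ {t})) ∪ U}`;
in particular the nested pre-Lie identity holds, while nested associativity fails
whenever `|U| ≥ 2` (and the coefficient `|U|(|U|−1)` does not vanish in `K`). -/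
theorem eComp_npl (K : Type*) [CommRing K]
    (S T U : Finset α) (hS : S.Nonempty) (hT : T.Nonempty) (hU : U.Nonempty)
    (hST : Disjoint S T) (hSU : Disjoint S U) (hTU : Disjoint T U)
    (s t : α) (hs : s ∈ S) (ht : t ∈ T) :
    eComp K s (Finsupp.single S 1) (eComp K t (Finsupp.single T 1) (Finsupp.single U 1)) -
        eComp K t (eComp K s (Finsupp.single S 1) (Finsupp.single T 1)) (Finsupp.single U 1) =
      eComp K t (Finsupp.single T 1) (eComp K s (Finsupp.single S 1) (Finsupp.single U 1)) -
        eComp K s (eComp K t (Finsupp.single T 1) (Finsupp.single S 1)) (Finsupp.single U 1) ∧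
    eComp K s (Finsupp.single S 1) (eComp K t (Finsupp.single T 1) (Finsupp.single U 1)) -
        eComp K t (eComp K s (Finsupp.single S 1) (Finsupp.single T 1)) (Finsupp.single U 1) =
      ((U.card * (U.card - 1) : ℕ) : K) •
        Finsupp.single (((S \ {s}) ∪ (T \ {t})) ∪ U) 1 ∧
    (2 ≤ U.card → ((U.card * (U.card - 1) : ℕ) : K) ≠ 0 →
      eComp K s (Finsupp.single S 1) (eComp K t (Finsupp.single T 1) (Finsupp.single U 1)) ≠
        eComp K t (eComp K s (Finsupp.single S 1) (Finsupp.single T 1)) (Finsupp.single U 1)) := by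
  have htS : t ∉ S \ {s} := fun h => Finset.disjoint_right.mp hST ht (Finset.mem_sdiff.mp h).1
  have hsT : s ∉ T \ {t} := fun h => Finset.disjoint_left.mp hST hs (Finset.mem_sdiff.mp h).1
  -- set identities
  have e1 : (S \ {s}) ∪ ((T \ {t}) ∪ U) = ((S \ {s}) ∪ (T \ {t})) ∪ U :=
    (Finset.union_assoc _ _ _).symm
  have e2 : (((S \ {s}) ∪ T) \ {t}) ∪ U = ((S \ {s}) ∪ (T \ {t})) ∪ U := by
    rw [Finset.union_sdiff_distrib, Finset.sdiff_eq_self_of_disjoint (by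
      simpa using htS)]
  have e3 : (T \ {t}) ∪ ((S \ {s}) ∪ U) = ((S \ {s}) ∪ (T \ {t})) ∪ U := by
    rw [← Finset.union_assoc, Finset.union_comm (T \ {t})]
  have e4 : (((T \ {t}) ∪ S) \ {s}) ∪ U = ((S \ {s}) ∪ (T \ {t})) ∪ U := by
    rw [Finset.union_sdiff_distrib, Finset.sdiff_eq_self_of_disjoint (by
      simpa using hsT), Finset.union_comm (T \ {t})]
  -- card identities
  have hT1 : 1 ≤ T.card := hT.card_pos
  have hS1 : 1 ≤ S.card := hS.card_pos
  have hU1 : 1 ≤ U.card := hU.card_pos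
  have c1 : ((T \ {t}) ∪ U).card = T.card - 1 + U.card := by
    rw [Finset.card_union_of_disjoint (Finset.disjoint_of_subset_left
      (Finset.sdiff_subset) hTU)]
    congr 1
    rw [Finset.sdiff_singleton_eq_erase, Finset.card_erase_of_mem ht]
  have c2 : ((S \ {s}) ∪ U).card = S.card - 1 + U.card := by
    rw [Finset.card_union_of_disjoint (Finset.disjoint_of_subset_left
      (Finset.sdiff_subset) hSU)]
    congr 1
    rw [Finset.sdiff_singleton_eq_erase, Finset.card_erase_of_mem hs]
  simp only [eComp_single, e1, e2, e3, e4, c1, c2, ← Finsupp.single_sub,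
    Finsupp.smul_single, one_mul, mul_one]
  have cL : (U.card : K) * ((T.card - 1 + U.card : ℕ) : K) - (T.card : K) * (U.card : K)
      = ((U.card * (U.card - 1) : ℕ) : K) := by
    push_cast [Nat.cast_sub hT1, Nat.cast_sub hU1]; ring
  have cR : (U.card : K) * ((S.card - 1 + U.card : ℕ) : K) - (S.card : K) * (U.card : K)
      = ((U.card * (U.card - 1) : ℕ) : K) := by
    push_cast [Nat.cast_sub hS1, Nat.cast_sub hU1]; ring
  refine ⟨congrArg _ (cL.trans cR.symm), by rw [smul_eq_mul, mul_one]; exact congrArg _ cL, ?_⟩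
  intro _ hne heq
  apply hne
  have h := DFunLike.congr_fun heq ((S \ {s}) ∪ (T \ {t}) ∪ U)
  rw [Finsupp.single_eq_same, Finsupp.single_eq_same] at h
  rw [← cL, h, sub_self]
end

section
/- Let K be a commutative ring, let S, T, R be pairwise disjoint nonempty finite subsets of α, let π, τ, ρ be linear set partitions of S, T, R respectively, and let s ∈ S, t ∈ T. In the free K-module with basis the linear set partitions of finite subsets of α, define π ▷_s τ := Σ_{ℓ ∈ τ} [ (π ∖ {ℓ_s}) ∪ {ℓ_s ∘_s ℓ} ∪ (τ ∖ {ℓ}) ], a sum over the lists ℓ of τ of linear set partitions of (S ∖ {s}) ∪ T, extended K-bilinearly. Then the nested pre-Lie identity holds: π ▷_s (τ ▷_t ρ) − (π ▷_s τ) ▷_t ρ = τ ▷_t (π ▷_s ρ) − (τ ▷_t π) ▷_s ρ. -/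
variable {α : Type*} [DecidableEq α]

/-- A linear set partition of a finite set `S`: a finite set of nonempty duplicate-free
lists whose element sets are pairwise disjoint with union `S`. -/
def IsLinearSetPartition (π : Finset (List α)) (S : Finset α) : Prop :=
  (∀ l ∈ π, l ≠ [] ∧ l.Nodup) ∧
  (∀ l ∈ π, ∀ l' ∈ π, l ≠ l' → ∀ x ∈ l, x ∉ l') ∧
  π.biUnion (fun l => l.toFinset) = S

/-- The substitution `w ∘_s m`: if `w = x ++ [s] ++ y`, this is `x ++ m ++ y`. -/
def substAt (s : α) (m w : List α) : List α :=
  w.takeWhile (fun x => x ≠ s) ++ m ++ (w.dropWhile (fun x => x ≠ s)).tail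

/-- `(π \ {ℓ_s}) ∪ {ℓ_s ∘_s m}`: replace the unique list of `π` containing `s` by its
substitution with `m` at `s`, leaving the other lists unchanged. -/
def lspSubst (s : α) (m : List α) (π : Finset (List α)) : Finset (List α) :=
  π.image (fun l => if s ∈ l then substAt s m l else l)

/-- The NPL partial composition of linear set partitions,
`π ▷_s τ := Σ_{ℓ ∈ τ} [(π \ {ℓ_s}) ∪ {ℓ_s ∘_s ℓ} ∪ (τ \ {ℓ})]`, taken in the free
`K`-module on linear set partitions. -/
noncomputable def lComp (K : Type*) [CommRing K] (s : α)
    (π τ : Finset (List α)) : Finset (List α) →₀ K :=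
  ∑ l ∈ τ, Finsupp.single (lspSubst s l π ∪ τ.erase l) 1

/-- The bilinear extension of `▷_s` to the free `K`-module on linear set partitions. -/
noncomputable def lCompL (K : Type*) [CommRing K] (s : α)
    (x y : Finset (List α) →₀ K) : Finset (List α) →₀ K :=
  x.sum fun π a => y.sum fun τ b => (a * b) • lComp K s π τ

/-! Let `p = ℓ_s ∈ π` and `q = ℓ_t ∈ τ`. Expanding `π ▷_s (τ ▷_t ρ)` over `m ∈ ρ` and then over
the lists `l` of the resulting partition gives three kinds of terms: `l = q ∘_t m`,
`l ∈ τ \ {q}` and `l ∈ ρ \ {m}`. The first two kinds cancel against `(π ▷_s τ) ▷_t ρ`: the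
summand `l = q` by `(p ∘_s q) ∘_t m = p ∘_s (q ∘_t m)`, the others term by term. What is left is
the sum, over ordered pairs `m ≠ l` of lists of `ρ`, of the partition in which `p` becomes
`p ∘_s l` and `q` becomes `q ∘_t m`, and this is symmetric in `(π, s)` and `(τ, t)`. -/

theorem substAt_append_cons {s : α} (m : List α) {u : List α} (v : List α) (hu : s ∉ u) :
    substAt s m (u ++ s :: v) = u ++ m ++ v := by
  have hne : ∀ x ∈ u, decide (x ≠ s) = true := fun x hx => by
    simpa using ne_of_mem_of_not_mem hx hu
  rw [substAt, List.takeWhile_append_of_pos hne, List.dropWhile_append_of_pos hne]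
  simp

theorem mem_substAt_of_mem {s x : α} {m : List α} (w : List α) (hx : x ∈ m) :
    x ∈ substAt s m w := by
  simp [substAt, hx]

theorem mem_or_mem_of_mem_substAt {s x : α} {m w : List α} (hx : x ∈ substAt s m w) :
    x ∈ m ∨ x ∈ w := by
  simp only [substAt, List.mem_append] at hx
  rcases hx with (h | h) | h
  · exact Or.inr ((List.takeWhile_prefix _).subset h)
  · exact Or.inl h
  · exact Or.inr ((List.dropWhile_suffix _).subset (List.mem_of_mem_tail h))

theorem substAt_substAt {s t : α} {p q : List α} (m : List α) (hs : s ∈ p) (ht : t ∈ q)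
    (hsq : s ∉ q) : substAt s m (substAt t p q) = substAt t (substAt s m p) q := by
  obtain ⟨a, b, ha, rfl, -⟩ := List.exists_erase_eq ht
  obtain ⟨c, d, hc, rfl, -⟩ := List.exists_erase_eq hs
  have hsa : s ∉ a := fun h => hsq (by simp [h])
  rw [substAt_append_cons _ _ ha, substAt_append_cons _ _ hc, substAt_append_cons _ _ ha,
    show a ++ (c ++ s :: d) ++ b = (a ++ c) ++ s :: (d ++ b) by simp,
    substAt_append_cons _ _ (by simp [hsa, hc])]
  simp

/-- `p` is the list `ℓ_s` of `π`. -/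
def IsBlockOf (π : Finset (List α)) (s : α) (p : List α) : Prop :=
  p ∈ π ∧ s ∈ p ∧ ∀ l ∈ π, s ∈ l → l = p

theorem isBlockOf_insert {σ : Finset (List α)} {t : α} {w : List α} (ht : t ∈ w)
    (hσ : ∀ l ∈ σ, t ∉ l) : IsBlockOf (insert w σ) t w := by
  refine ⟨Finset.mem_insert_self w σ, ht, fun l hl htl => ?_⟩
  rcases Finset.mem_insert.1 hl with rfl | hl
  · rfl
  · exact absurd htl (hσ l hl)

theorem lspSubst_of_isBlockOf {σ : Finset (List α)} {s : α} {w : List α}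
    (h : IsBlockOf σ s w) (m : List α) :
    lspSubst s m σ = insert (substAt s m w) (σ.erase w) := by
  have hid : ∀ l ∈ σ.erase w, (if s ∈ l then substAt s m l else l) = l := fun l hl =>
    if_neg fun hsl => (Finset.mem_erase.1 hl).1 (h.2.2 l (Finset.mem_erase.1 hl).2 hsl)
  rw [lspSubst, ← Finset.insert_erase h.1, Finset.image_insert, if_pos h.2.1,
    Finset.erase_insert (Finset.notMem_erase w σ), Finset.image_congr hid, Finset.image_id']

namespace IsLinearSetPartition

variable {π τ : Finset (List α)} {S T : Finset α}

theorem mem_of_mem (hπ : IsLinearSetPartition π S) {l : List α} {x : α} (hl : l ∈ π)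
    (hx : x ∈ l) : x ∈ S :=
  hπ.2.2 ▸ Finset.mem_biUnion.2 ⟨l, hl, List.mem_toFinset.2 hx⟩

theorem exists_mem (hπ : IsLinearSetPartition π S) {l : List α} (hl : l ∈ π) : ∃ x, x ∈ l :=
  List.exists_mem_of_ne_nil l (hπ.1 l hl).1

theorem eq_of_mem_of_mem (hπ : IsLinearSetPartition π S) {l l' : List α} {x : α}
    (hl : l ∈ π) (hl' : l' ∈ π) (hx : x ∈ l) (hx' : x ∈ l') : l = l' := by
  by_contra hne
  exact hπ.2.1 l hl l' hl' hne x hx hx'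

theorem exists_isBlockOf (hπ : IsLinearSetPartition π S) {s : α} (hs : s ∈ S) :
    ∃ p, IsBlockOf π s p := by
  rw [← hπ.2.2] at hs
  obtain ⟨p, hp, hsp⟩ := Finset.mem_biUnion.1 hs
  exact ⟨p, hp, List.mem_toFinset.1 hsp, fun l hl hsl =>
    hπ.eq_of_mem_of_mem hl hp hsl (List.mem_toFinset.1 hsp)⟩

theorem disjoint (hπ : IsLinearSetPartition π S) (hτ : IsLinearSetPartition τ T)
    (hST : Disjoint S T) : Disjoint π τ := by
  refine Finset.disjoint_left.2 fun l hl hl' => ?_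
  obtain ⟨x, hx⟩ := hπ.exists_mem hl
  exact Finset.disjoint_left.1 hST (hπ.mem_of_mem hl hx) (hτ.mem_of_mem hl' hx)

end IsLinearSetPartition

def lCompTerm (s : α) (π τ : Finset (List α)) (l : List α) : Finset (List α) :=
  lspSubst s l π ∪ τ.erase l

section

variable (K : Type*) [CommRing K]

theorem lComp_eq_sum_lCompTerm (s : α) (π τ : Finset (List α)) :
    lComp K s π τ = ∑ l ∈ τ, Finsupp.single (lCompTerm s π τ l) 1 :=
  rfl

theorem lCompTerm_of_isBlockOf {π : Finset (List α)} {s : α} {p : List α}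
    (hp : IsBlockOf π s p) (τ : Finset (List α)) (l : List α) :
    lCompTerm s π τ l = insert (substAt s l p) (π.erase p) ∪ τ.erase l := by
  rw [lCompTerm, lspSubst_of_isBlockOf hp]

theorem lCompL_single_lComp (s t : α) (π τ ρ : Finset (List α)) :
    lCompL K s (Finsupp.single π 1) (lComp K t τ ρ) =
      ∑ m ∈ ρ, lComp K s π (lCompTerm t τ ρ m) := by
  rw [lCompL, Finsupp.sum_single_index (by simp [Finsupp.sum]), lComp,
    ← Finsupp.sum_finsetSum_index (by simp) (by intro i x y; simp [mul_add, add_smul])]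
  exact Finset.sum_congr rfl fun m _ => by
    rw [Finsupp.sum_single_index (by simp), one_mul, one_smul, lCompTerm]

theorem lCompL_lComp_single (s t : α) (π τ ρ : Finset (List α)) :
    lCompL K t (lComp K s π τ) (Finsupp.single ρ 1) =
      ∑ l ∈ τ, lComp K t (lCompTerm s π τ l) ρ := by
  rw [lCompL, lComp,
    ← Finsupp.sum_finsetSum_index (by simp [Finsupp.sum]) (by
      intro i x y
      rw [← Finsupp.sum_add]
      exact Finsupp.sum_congr fun τ' _ => by rw [add_mul, add_smul])]
  exact Finset.sum_congr rfl fun l _ => by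
    rw [Finsupp.sum_single_index (by simp), Finsupp.sum_single_index (by simp), one_mul,
      one_smul, lCompTerm]

end

section

variable (K : Type*) [CommRing K] {π τ ρ : Finset (List α)} {s t : α} {p q : List α}

theorem lComp_lCompTerm_eq {T R : Finset α} (hτ : IsLinearSetPartition τ T)
    (hρ : IsLinearSetPartition ρ R) (hTR : Disjoint T R) (hp : IsBlockOf π s p)
    (hq : IsBlockOf τ t q) {m : List α} (hm : m ∈ ρ) :
    lComp K s π (lCompTerm t τ ρ m) =
      Finsupp.single (insert (substAt s (substAt t m q) p) (π.erase p ∪ τ.erase q) ∪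
          ρ.erase m) 1 +
        ∑ l ∈ τ.erase q, Finsupp.single (insert (substAt t m q)
          (insert (substAt s l p) (π.erase p) ∪ (τ.erase q).erase l) ∪ ρ.erase m) 1 +
        ∑ l ∈ ρ.erase m, Finsupp.single (insert (substAt s l p) (π.erase p) ∪
          (insert (substAt t m q) (τ.erase q) ∪ (ρ.erase m).erase l)) 1 := by
  obtain ⟨x, hxm⟩ := hρ.exists_mem hm
  have hxw : x ∈ substAt t m q := mem_substAt_of_mem q hxm
  have hwτ : substAt t m q ∉ τ.erase q := fun h => Finset.disjoint_left.1 hTR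
    (hτ.mem_of_mem (Finset.mem_of_mem_erase h) hxw) (hρ.mem_of_mem hm hxm)
  have hwρ : substAt t m q ∉ ρ.erase m := fun h => (Finset.mem_erase.1 h).1
    (hρ.eq_of_mem_of_mem (Finset.mem_of_mem_erase h) hm hxw hxm)
  have hτρ : Disjoint (τ.erase q) (ρ.erase m) :=
    Finset.disjoint_of_subset_left (Finset.erase_subset q τ)
      (Finset.disjoint_of_subset_right (Finset.erase_subset m ρ) (hτ.disjoint hρ hTR))
  rw [lComp_eq_sum_lCompTerm, lCompTerm_of_isBlockOf hq,
    Finset.sum_union (Finset.disjoint_insert_left.2 ⟨hwρ, hτρ⟩), Finset.sum_insert hwτ]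
  congr 1
  congr 1
  · rw [lCompTerm_of_isBlockOf hp, Finset.erase_union_distrib, Finset.erase_insert hwτ,
      Finset.erase_eq_of_notMem hwρ, ← Finset.union_assoc, ← Finset.insert_union]
  · refine Finset.sum_congr rfl fun l hl => ?_
    rw [lCompTerm_of_isBlockOf hp, Finset.erase_union_distrib,
      Finset.erase_insert_of_ne (ne_of_mem_of_not_mem hl hwτ).symm,
      Finset.erase_eq_of_notMem (Finset.disjoint_left.1 hτρ hl), ← Finset.union_assoc,
      Finset.union_insert]
  · refine Finset.sum_congr rfl fun l hl => ?_
    rw [lCompTerm_of_isBlockOf hp, Finset.erase_union_distrib,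
      Finset.erase_insert_of_ne (ne_of_mem_of_not_mem hl hwρ).symm,
      Finset.erase_eq_of_notMem (Finset.disjoint_right.1 hτρ hl)]

theorem lComp_lCompTerm_self_eq (hp : IsBlockOf π s p) (hq : IsBlockOf τ t q)
    (htπ : ∀ l ∈ π, t ∉ l) :
    lComp K t (lCompTerm s π τ q) ρ =
      ∑ m ∈ ρ, Finsupp.single (insert (substAt s (substAt t m q) p)
        (π.erase p ∪ τ.erase q) ∪ ρ.erase m) 1 := by
  have hw : t ∈ substAt s q p := mem_substAt_of_mem p hq.2.1
  have hrest : ∀ l ∈ π.erase p ∪ τ.erase q, t ∉ l := fun l hl htl => by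
    rcases Finset.mem_union.1 hl with hl | hl
    · exact htπ l (Finset.mem_of_mem_erase hl) htl
    · exact (Finset.mem_erase.1 hl).1 (hq.2.2 l (Finset.mem_of_mem_erase hl) htl)
  rw [lComp_eq_sum_lCompTerm, lCompTerm_of_isBlockOf hp, Finset.insert_union]
  refine Finset.sum_congr rfl fun m _ => ?_
  rw [lCompTerm_of_isBlockOf (isBlockOf_insert hw hrest),
    Finset.erase_insert fun h => hrest _ h hw, substAt_substAt m hq.2.1 hp.2.1 (htπ p hp.1)]

theorem lComp_lCompTerm_of_ne_eq (hp : IsBlockOf π s p) (hq : IsBlockOf τ t q)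
    (htπ : ∀ l ∈ π, t ∉ l) {l : List α} (hl : l ∈ τ.erase q) :
    lComp K t (lCompTerm s π τ l) ρ =
      ∑ m ∈ ρ, Finsupp.single (insert (substAt t m q)
        (insert (substAt s l p) (π.erase p) ∪ (τ.erase q).erase l) ∪ ρ.erase m) 1 := by
  have hrest : ∀ l' ∈ insert (substAt s l p) (π.erase p), t ∉ l' := fun l' hl' htl' => by
    rcases Finset.mem_insert.1 hl' with rfl | hl'
    · rcases mem_or_mem_of_mem_substAt htl' with h | h
      · exact (Finset.mem_erase.1 hl).1 (hq.2.2 l (Finset.mem_of_mem_erase hl) h)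
      · exact htπ p hp.1 h
    · exact htπ l' (Finset.mem_of_mem_erase hl') htl'
  have hblock : IsBlockOf (insert (substAt s l p) (π.erase p) ∪ τ.erase l) t q := by
    refine ⟨Finset.mem_union_right _ (Finset.mem_erase.2 ⟨(Finset.mem_erase.1 hl).1.symm, hq.1⟩),
      hq.2.1, fun l' hl' htl' => hq.2.2 l' ?_ htl'⟩
    rcases Finset.mem_union.1 hl' with h | h
    · exact absurd htl' (hrest l' h)
    · exact Finset.mem_of_mem_erase h
  rw [lComp_eq_sum_lCompTerm, lCompTerm_of_isBlockOf hp]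
  refine Finset.sum_congr rfl fun m _ => ?_
  rw [lCompTerm_of_isBlockOf hblock, Finset.erase_union_distrib,
    Finset.erase_eq_of_notMem fun h => hrest q h hq.2.1, Finset.erase_right_comm]

theorem lCompL_associator_eq {S T R : Finset α} (hπ : IsLinearSetPartition π S)
    (hτ : IsLinearSetPartition τ T) (hρ : IsLinearSetPartition ρ R) (hST : Disjoint S T)
    (hTR : Disjoint T R) (hp : IsBlockOf π s p) (hq : IsBlockOf τ t q) :
    lCompL K s (Finsupp.single π 1) (lComp K t τ ρ) -
        lCompL K t (lComp K s π τ) (Finsupp.single ρ 1) =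
      ∑ m ∈ ρ, ∑ l ∈ ρ.erase m, Finsupp.single (insert (substAt s l p) (π.erase p) ∪
        (insert (substAt t m q) (τ.erase q) ∪ (ρ.erase m).erase l)) 1 := by
  have htπ : ∀ l ∈ π, t ∉ l := fun l hl htl => Finset.disjoint_left.1 hST
    (hπ.mem_of_mem hl htl) (hτ.mem_of_mem hq.1 hq.2.1)
  rw [lCompL_single_lComp, Finset.sum_congr rfl fun m hm => lComp_lCompTerm_eq K hτ hρ hTR hp hq hm,
    lCompL_lComp_single, ← Finset.add_sum_erase τ _ hq.1, lComp_lCompTerm_self_eq K hp hq htπ,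
    Finset.sum_congr rfl fun l hl => lComp_lCompTerm_of_ne_eq K hp hq htπ hl,
    Finset.sum_add_distrib, Finset.sum_add_distrib, Finset.sum_comm (s := τ.erase q) (t := ρ)]
  abel

end

theorem lComp_nested_preLie_general (K : Type*) [CommRing K]
    (S T R : Finset α) (π τ ρ : Finset (List α))
    (hπ : IsLinearSetPartition π S) (hτ : IsLinearSetPartition τ T)
    (hρ : IsLinearSetPartition ρ R)
    (hST : Disjoint S T) (hSR : Disjoint S R) (hTR : Disjoint T R)
    (s t : α) (hs : s ∈ S) (ht : t ∈ T) :
    lCompL K s (Finsupp.single π 1) (lComp K t τ ρ) -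
        lCompL K t (lComp K s π τ) (Finsupp.single ρ 1) =
      lCompL K t (Finsupp.single τ 1) (lComp K s π ρ) -
        lCompL K s (lComp K t τ π) (Finsupp.single ρ 1) := by
  obtain ⟨p, hp⟩ := hπ.exists_isBlockOf hs
  obtain ⟨q, hq⟩ := hτ.exists_isBlockOf ht
  rw [lCompL_associator_eq K hπ hτ hρ hST hTR hp hq,
    lCompL_associator_eq K hτ hπ hρ hST.symm hSR hq hp,
    Finset.sum_comm' (s' := fun l => ρ.erase l) (t' := ρ) fun m l => by simp only [Finset.mem_erase, ne_comm]; tauto]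
  refine Finset.sum_congr rfl fun l _ => Finset.sum_congr rfl fun m _ => ?_
  rw [Finset.union_left_comm, Finset.erase_right_comm]

/-- The nested pre-Lie identity
`π ▷_s (τ ▷_t ρ) − (π ▷_s τ) ▷_t ρ = τ ▷_t (π ▷_s ρ) − (τ ▷_t π) ▷_s ρ`
for the NPL-operad structure on the species of linear set partitions (the instance
for `As₊` of the NPL-operad structure on `E ∘ q`). -/
theorem lComp_nested_preLie (K : Type*) [CommRing K]
    (S T R : Finset α) (π τ ρ : Finset (List α))
    (hπ : IsLinearSetPartition π S) (hτ : IsLinearSetPartition τ T)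
    (hρ : IsLinearSetPartition ρ R)
    (hS : S.Nonempty) (hT : T.Nonempty) (hR : R.Nonempty)
    (hST : Disjoint S T) (hSR : Disjoint S R) (hTR : Disjoint T R)
    (s t : α) (hs : s ∈ S) (ht : t ∈ T) :
    lCompL K s (Finsupp.single π 1) (lComp K t τ ρ) -
        lCompL K t (lComp K s π τ) (Finsupp.single ρ 1) =
      lCompL K t (Finsupp.single τ 1) (lComp K s π ρ) -
        lCompL K s (lComp K t τ π) (Finsupp.single ρ 1) :=
  lComp_nested_preLie_general K S T R π τ ρ hπ hτ hρ hST hSR hTR s t hs ht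
end
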